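/- Let (μ, W) be a matrix weight with all moments finite, and let (P_n) be a monic orthogonal family for (μ, W) such that each squared norm H_n = ∫ P_n(x) W(x) P_n(x)* dμ(x) is positive definite. Then for every T ∈ 𝒜 and every n ∈ ℕ, T H_n = H_n T*. -/

import Mathlib

open Matrix MeasureTheory ComplexOrder

attribute [local instance] Matrix.normedAddCommGroup Matrix.normedSpace

/-- The evaluation at `x` of the matrix polynomial with coefficients `C 0, …, C n`. -/
noncomputable def matrixPolyEval (N : ℕ) (C : ℕ → Matrix (Fin N) (Fin N) ℂ) (n : ℕ)
    (x : ℂ) : Matrix (Fin N) (Fin N) ℂ :=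
  ∑ k ∈ Finset.range (n + 1), x ^ k • C k

/-!
Write `P = P_n`. Since `P` is monic, `D = T P - P T` has degree `< n`, so it is a left
combination of `P_0, …, P_{n-1}` and hence orthogonal to `P` from either side. On the other hand
`T W = W Tᴴ` a.e. gives `P T W Pᴴ = P W Tᴴ Pᴴ`, so that `T (P W Pᴴ) - (P W Pᴴ) Tᴴ = D W Pᴴ - P W Dᴴ`
a.e.; integrating yields `T H_n - H_n Tᴴ = 0`.
-/

variable {N : ℕ}

section MatrixPolyEval

variable (C D : ℕ → Matrix (Fin N) (Fin N) ℂ) (n : ℕ) (x : ℂ)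

lemma matrixPolyEval_succ :
    matrixPolyEval N C (n + 1) x = matrixPolyEval N C n x + x ^ (n + 1) • C (n + 1) :=
  Finset.sum_range_succ _ _

lemma matrixPolyEval_sub :
    matrixPolyEval N (fun k => C k - D k) n x = matrixPolyEval N C n x - matrixPolyEval N D n x := by
  simp only [matrixPolyEval, smul_sub, Finset.sum_sub_distrib]

lemma mul_matrixPolyEval (A : Matrix (Fin N) (Fin N) ℂ) :
    A * matrixPolyEval N C n x = matrixPolyEval N (fun k => A * C k) n x := by
  simp only [matrixPolyEval, Finset.mul_sum, mul_smul_comm]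

lemma matrixPolyEval_mul (A : Matrix (Fin N) (Fin N) ℂ) :
    matrixPolyEval N C n x * A = matrixPolyEval N (fun k => C k * A) n x := by
  simp only [matrixPolyEval, Finset.sum_mul, smul_mul_assoc]

/-- Left division by the monic `P_0, P_1, …`; the hypothesis `C n = 0` says that the polynomial
has degree `< n`. -/
lemma exists_matrixPolyEval_eq_sum_mul {Pc : ℕ → ℕ → Matrix (Fin N) (Fin N) ℂ}
    (hmonic : ∀ n, Pc n n = 1) (n : ℕ) (C : ℕ → Matrix (Fin N) (Fin N) ℂ) (hC : C n = 0) :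
    ∃ B : ℕ → Matrix (Fin N) (Fin N) ℂ, ∀ x,
      matrixPolyEval N C n x = ∑ k ∈ Finset.range n, B k * matrixPolyEval N (Pc k) k x := by
  induction n generalizing C with
  | zero => exact ⟨0, fun x => by simp [matrixPolyEval, hC]⟩
  | succ n ih =>
    obtain ⟨B, hB⟩ := ih (fun k => C k - C n * Pc n k) (by simp [hmonic])
    refine ⟨fun k => if k = n then C n else B k, fun x => ?_⟩
    have hB' : ∑ k ∈ Finset.range n,
        (if k = n then C n else B k) * matrixPolyEval N (Pc k) k x =
          ∑ k ∈ Finset.range n, B k * matrixPolyEval N (Pc k) k x :=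
      Finset.sum_congr rfl fun k hk => by rw [if_neg (Finset.mem_range.mp hk).ne]
    rw [Finset.sum_range_succ, hB']
    dsimp only
    rw [if_pos rfl, ← hB, matrixPolyEval_sub, ← mul_matrixPolyEval,
      matrixPolyEval_succ, hC, smul_zero, add_zero, sub_add_cancel]

end MatrixPolyEval

noncomputable def mulLeftRightCLM (A B : Matrix (Fin N) (Fin N) ℂ) :
    Matrix (Fin N) (Fin N) ℂ →L[ℂ] Matrix (Fin N) (Fin N) ℂ :=
  LinearMap.toContinuousLinearMap (LinearMap.mulLeftRight ℂ (A, B))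

@[simp]
lemma mulLeftRightCLM_apply (A B X : Matrix (Fin N) (Fin N) ℂ) :
    mulLeftRightCLM A B X = A * X * B :=
  rfl

namespace MeasureTheory

variable {α : Type*} [MeasurableSpace α] {μ : Measure α}

-- `Integrable` is spelled with an explicit instance because instance search cannot match the
-- topology of `Matrix.normedAddCommGroup` with the product topology on `Matrix`.
lemma Integrable.mul_mul {f : α → Matrix (Fin N) (Fin N) ℂ}
    (hf : @Integrable _ _ SeminormedAddGroup.toContinuousENorm _ _ f μ)
    (A B : Matrix (Fin N) (Fin N) ℂ) :
    @Integrable _ _ SeminormedAddGroup.toContinuousENorm _ _ (fun x => A * f x * B) μ :=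
  (mulLeftRightCLM A B).integrable_comp hf

lemma integral_mul_mul {f : α → Matrix (Fin N) (Fin N) ℂ}
    (hf : @Integrable _ _ SeminormedAddGroup.toContinuousENorm _ _ f μ)
    (A B : Matrix (Fin N) (Fin N) ℂ) : ∫ x, A * f x * B ∂μ = A * (∫ x, f x ∂μ) * B :=
  (mulLeftRightCLM A B).integral_comp_comm hf

lemma integral_sum_mul_mul_eq_zero {ι : Type*} (s : Finset ι)
    {f : ι → α → Matrix (Fin N) (Fin N) ℂ}
    (hf : ∀ i ∈ s, @Integrable _ _ SeminormedAddGroup.toContinuousENorm _ _ (f i) μ)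
    (hf0 : ∀ i ∈ s, ∫ x, f i x ∂μ = 0) (A B : ι → Matrix (Fin N) (Fin N) ℂ) :
    ∫ x, ∑ i ∈ s, A i * f i x * B i ∂μ = 0 := by
  rw [integral_finsetSum s fun i hi => (hf i hi).mul_mul _ _]
  exact Finset.sum_eq_zero fun i hi => by rw [integral_mul_mul (hf i hi), hf0 i hi, mul_zero,
    zero_mul]

end MeasureTheory

section MatrixWeight

def HasFiniteMoments (μ : Measure ℝ) (W : ℝ → Matrix (Fin N) (Fin N) ℂ) : Prop :=
  ∀ n : ℕ, @Integrable _ _ SeminormedAddGroup.toContinuousENorm _ _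
    (fun x : ℝ => (x : ℂ) ^ n • W x) μ

def IsOrthogonalPolyFamily (μ : Measure ℝ) (W : ℝ → Matrix (Fin N) (Fin N) ℂ)
    (Pc : ℕ → ℕ → Matrix (Fin N) (Fin N) ℂ) : Prop :=
  ∀ n m, n ≠ m → ∫ x : ℝ, matrixPolyEval N (Pc n) n (x : ℂ) * W x *
    (matrixPolyEval N (Pc m) m (x : ℂ))ᴴ ∂μ = 0

variable {μ : Measure ℝ} {W : ℝ → Matrix (Fin N) (Fin N) ℂ}

lemma integrable_matrixPolyEval_mul_mul_conjTranspose
    (hmom : HasFiniteMoments μ W)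
    (C D : ℕ → Matrix (Fin N) (Fin N) ℂ) (a b : ℕ) :
    @Integrable _ _ SeminormedAddGroup.toContinuousENorm _ _
      (fun x : ℝ => matrixPolyEval N C a x * W x * (matrixPolyEval N D b x)ᴴ) μ := by
  have hexpand : (fun x : ℝ => matrixPolyEval N C a x * W x * (matrixPolyEval N D b x)ᴴ) =
      fun x : ℝ => ∑ i ∈ Finset.range (a + 1), ∑ j ∈ Finset.range (b + 1),
        C i * ((x : ℂ) ^ (i + j) • W x) * (D j)ᴴ := by
    funext x
    simp only [matrixPolyEval, conjTranspose_sum, conjTranspose_smul, star_pow,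
      Complex.star_def, Complex.conj_ofReal, Finset.sum_mul, Finset.mul_sum, smul_mul_assoc,
      mul_smul_comm, Finset.smul_sum, smul_smul, pow_add]
    rw [Finset.sum_comm]
    exact Finset.sum_congr rfl fun i _ => Finset.sum_congr rfl fun j _ => by rw [mul_comm]
  rw [hexpand]
  refine integrable_finsetSum _ fun i _ => ?_
  refine integrable_finsetSum _ fun j _ => ?_
  exact (hmom (i + j)).mul_mul _ _

variable {Pc : ℕ → ℕ → Matrix (Fin N) (Fin N) ℂ}

lemma integral_matrixPolyEval_mul_mul_conjTranspose_eq_zero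
    (hmom : HasFiniteMoments μ W)
    (hmonic : ∀ n, Pc n n = 1)
    (horth : IsOrthogonalPolyFamily μ W Pc)
    {n : ℕ} {C : ℕ → Matrix (Fin N) (Fin N) ℂ} (hC : C n = 0) :
    ∫ x : ℝ, matrixPolyEval N C n x * W x * (matrixPolyEval N (Pc n) n x)ᴴ ∂μ = 0 := by
  obtain ⟨B, hB⟩ := exists_matrixPolyEval_eq_sum_mul hmonic n C hC
  have hexpand : ∀ x : ℝ, matrixPolyEval N C n x * W x * (matrixPolyEval N (Pc n) n x)ᴴ =
      ∑ k ∈ Finset.range n,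
        B k * (matrixPolyEval N (Pc k) k x * W x * (matrixPolyEval N (Pc n) n x)ᴴ) * 1 :=
    fun x => by simp only [hB, Finset.sum_mul, mul_assoc, mul_one]
  simp_rw [hexpand]
  exact integral_sum_mul_mul_eq_zero _
    (fun k _ => integrable_matrixPolyEval_mul_mul_conjTranspose hmom _ _ k n)
    (fun k hk => horth k n (Finset.mem_range.mp hk).ne) _ _

lemma integral_mul_mul_conjTranspose_matrixPolyEval_eq_zero
    (hmom : HasFiniteMoments μ W)
    (hmonic : ∀ n, Pc n n = 1)
    (horth : IsOrthogonalPolyFamily μ W Pc)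
    {n : ℕ} {C : ℕ → Matrix (Fin N) (Fin N) ℂ} (hC : C n = 0) :
    ∫ x : ℝ, matrixPolyEval N (Pc n) n x * W x * (matrixPolyEval N C n x)ᴴ ∂μ = 0 := by
  obtain ⟨B, hB⟩ := exists_matrixPolyEval_eq_sum_mul hmonic n C hC
  have hexpand : ∀ x : ℝ, matrixPolyEval N (Pc n) n x * W x * (matrixPolyEval N C n x)ᴴ =
      ∑ k ∈ Finset.range n,
        1 * (matrixPolyEval N (Pc n) n x * W x * (matrixPolyEval N (Pc k) k x)ᴴ) * (B k)ᴴ :=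
    fun x => by simp only [hB, conjTranspose_sum, conjTranspose_mul, Finset.mul_sum, mul_assoc,
      one_mul]
  simp_rw [hexpand]
  exact integral_sum_mul_mul_eq_zero _
    (fun k _ => integrable_matrixPolyEval_mul_mul_conjTranspose hmom _ _ n k)
    (fun k hk => horth n k (Finset.mem_range.mp hk).ne') _ _

end MatrixWeight

lemma mul_mul_mul_star_sub_eq_of_mul_eq {R : Type*} [Ring R] [StarRing R] {T W P : R}
    (h : T * W = W * star T) :
    T * (P * W * star P) - P * W * star P * star T =
      (T * P - P * T) * W * star P - P * W * star (T * P - P * T) := by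
  have hP : P * T * W = P * W * star T := by rw [mul_assoc, h, ← mul_assoc]
  simp only [star_sub, star_mul, sub_mul, mul_sub]
  rw [hP]
  noncomm_ring

theorem T_mul_Hn_eq_Hn_mul_Tstar_general (N : ℕ)
    (μ : Measure ℝ)
    (W : ℝ → Matrix (Fin N) (Fin N) ℂ)
    (hmom : ∀ n : ℕ, @Integrable _ _ SeminormedAddGroup.toContinuousENorm _ _ (fun x : ℝ => (x : ℂ) ^ n • W x) μ)
    (Pc : ℕ → ℕ → Matrix (Fin N) (Fin N) ℂ)
    (hmonic : ∀ n, Pc n n = 1)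
    (horth : ∀ n m, n ≠ m →
      (∫ x : ℝ, matrixPolyEval N (Pc n) n (x : ℂ) * W x *
        (matrixPolyEval N (Pc m) m (x : ℂ))ᴴ ∂μ) = 0)
    (H : ℕ → Matrix (Fin N) (Fin N) ℂ)
    (hH : ∀ n, H n = ∫ x : ℝ, matrixPolyEval N (Pc n) n (x : ℂ) * W x *
        (matrixPolyEval N (Pc n) n (x : ℂ))ᴴ ∂μ)
    (T : Matrix (Fin N) (Fin N) ℂ)
    (hT : ∀ᵐ x ∂μ, T * W x = W x * Tᴴ) :
    ∀ n, T * H n = H n * Tᴴ := by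
  intro n
  set P : ℝ → Matrix (Fin N) (Fin N) ℂ := fun x => matrixPolyEval N (Pc n) n x
  set C : ℕ → Matrix (Fin N) (Fin N) ℂ := fun k => T * Pc n k - Pc n k * T
  have hC : C n = 0 := by simp only [C, hmonic, mul_one, one_mul, sub_self]
  have hCP : ∀ x : ℝ, matrixPolyEval N C n x = T * P x - P x * T := fun x => by
    rw [matrixPolyEval_sub, mul_matrixPolyEval, matrixPolyEval_mul]
  have hInt : ∀ Q R : ℕ → Matrix (Fin N) (Fin N) ℂ, @Integrable _ _
      SeminormedAddGroup.toContinuousENorm _ _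
      (fun x : ℝ => matrixPolyEval N Q n x * W x * (matrixPolyEval N R n x)ᴴ) μ :=
    fun Q R => integrable_matrixPolyEval_mul_mul_conjTranspose hmom Q R n n
  have hzero : T * H n - H n * Tᴴ = 0 := calc
    T * H n - H n * Tᴴ =
        ∫ x, T * (P x * W x * (P x)ᴴ) * 1 - 1 * (P x * W x * (P x)ᴴ) * Tᴴ ∂μ := by
      rw [integral_sub ((hInt _ _).mul_mul _ _) ((hInt _ _).mul_mul _ _),
        integral_mul_mul (hInt _ _), integral_mul_mul (hInt _ _), hH, mul_one, one_mul]
    _ = ∫ x, matrixPolyEval N C n x * W x * (P x)ᴴ -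
          P x * W x * (matrixPolyEval N C n x)ᴴ ∂μ := by
      refine integral_congr_ae ?_
      filter_upwards [hT] with x hx
      rw [hCP, mul_one, one_mul]
      exact mul_mul_mul_star_sub_eq_of_mul_eq hx
    _ = 0 := by
      rw [integral_sub (hInt _ _) (hInt _ _),
        integral_matrixPolyEval_mul_mul_conjTranspose_eq_zero hmom hmonic horth hC,
        integral_mul_mul_conjTranspose_matrixPolyEval_eq_zero hmom hmonic horth hC, sub_zero]
  exact sub_eq_zero.mp hzero

/-- For a matrix weight with all moments finite and a monic orthogonal family `(P_n)`
with positive definite squared norms `H_n`, every `T ∈ 𝒜` satisfies `T H_n = H_n Tᴴ`. -/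
theorem T_mul_Hn_eq_Hn_mul_Tstar (N : ℕ) (hN : 1 ≤ N)
    (μ : Measure ℝ) [SigmaFinite μ]
    (W : ℝ → Matrix (Fin N) (Fin N) ℂ)
    (hWmeas : ∀ i j, Measurable fun x => W x i j)
    (hWpos : ∀ᵐ x ∂μ, (W x).PosDef)
    (hmom : ∀ n : ℕ, @Integrable _ _ SeminormedAddGroup.toContinuousENorm _ _ (fun x : ℝ => (x : ℂ) ^ n • W x) μ)
    (Pc : ℕ → ℕ → Matrix (Fin N) (Fin N) ℂ)
    (hmonic : ∀ n, Pc n n = 1)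
    (horth : ∀ n m, n ≠ m →
      (∫ x : ℝ, matrixPolyEval N (Pc n) n (x : ℂ) * W x *
        (matrixPolyEval N (Pc m) m (x : ℂ))ᴴ ∂μ) = 0)
    (H : ℕ → Matrix (Fin N) (Fin N) ℂ)
    (hH : ∀ n, H n = ∫ x : ℝ, matrixPolyEval N (Pc n) n (x : ℂ) * W x *
        (matrixPolyEval N (Pc n) n (x : ℂ))ᴴ ∂μ)
    (hHpos : ∀ n, (H n).PosDef)
    (T : Matrix (Fin N) (Fin N) ℂ)
    (hT : ∀ᵐ x ∂μ, T * W x = W x * Tᴴ) :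
    ∀ n, T * H n = H n * Tᴴ :=
  T_mul_Hn_eq_Hn_mul_Tstar_general N μ W hmom Pc hmonic horth H hH T hT
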